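/- arXiv:2604.12641 — 2 statements merged into one kernel-verified Lean document; each statement's English description precedes it below -/
import Mathlib

section
/- For every UCTP poset P on at least 2 elements and every fixed t ≥ 2, sat*([t]^n, P) = Ω(√n) as n → ∞. -/
open Filter

/-- An induced copy of the poset `P` inside the family `F`. -/
def InducedCopy (P : Type) [PartialOrder P] {α : Type} [PartialOrder α]
    (F : Set α) : Prop :=
  ∃ φ : P → α, Function.Injective φ ∧ (∀ x, φ x ∈ F) ∧ ∀ x y, φ x ≤ φ y ↔ x ≤ y

/-- `F` is induced `P`-free. -/
def PFree (P : Type) [PartialOrder P] {α : Type} [PartialOrder α] (F : Set α) : Prop :=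
  ¬ InducedCopy P F

/-- `F` is induced `P`-free and induced `P`-saturated. -/
def PSaturated (P : Type) [PartialOrder P] {α : Type} [PartialOrder α] (F : Set α) : Prop :=
  PFree P F ∧ ∀ g ∉ F, InducedCopy P (insert g F)

/-- The lifting operator `L_i`, copying coordinate `i` into a new last coordinate. -/
def lift {t n : ℕ} (i : Fin n) (f : Fin n → Fin t) : Fin (n + 1) → Fin t :=
  Fin.snoc f (f i)

/-- The coordinate-dropping operator `D_i`. -/
def drop {t n : ℕ} (i : Fin (n + 1)) (f : Fin (n + 1) → Fin t) : Fin n → Fin t :=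
  fun x => f (i.succAbove x)

/-- Coordinate `i` is separating for `F`. -/
def Separating {t n : ℕ} (F : Set (Fin n → Fin t)) (i : Fin n) : Prop :=
  ∃ f ∈ F, ∃ f' ∈ F, f ≠ f' ∧ (∀ x, x ≠ i → f x ≤ f' x) ∧ f' i < f i

/-- The induced saturation number `sat*([t]^n, P)`. -/
noncomputable def satStar (t n : ℕ) (P : Type) [PartialOrder P] : ℕ :=
  sInf {m | ∃ F : Set (Fin n → Fin t), PSaturated P F ∧ F.ncard = m}

/-- The antichain on `k` elements. -/
def AC (k : ℕ) := Fin k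

instance (k : ℕ) : PartialOrder (AC k) where
  le := Eq
  le_refl _ := rfl
  le_trans _ _ _ h h' := Eq.trans h h'
  le_antisymm _ _ h _ := h

/-- The unique cover twin property. -/
def UCTP (P : Type) [PartialOrder P] : Prop :=
  ∀ x y : P, y ⋖ x → ∃ y', y' ≠ y ∧ y' ≠ x ∧ y' ⋖ x

/-!
If a coordinate `i` is not separating for an induced `P`-saturated family `F`, one finds `f ∈ F`
and `g ∉ F` differing only in coordinate `i`, by a single step, that compare in the same way with
every other member of `F`. Saturation gives a copy of `P` through `g`; it must also pass through
`f`, for otherwise `f` could replace `g`. The two then sit in the copy as `p < q` with every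
other element below `q` already below `p`, so `q` covers `p` and nothing else, against UCTP.
Hence every coordinate is separating, and choosing for each coordinate a separating pair of
members is an injection `Fin n → F × F`, so `n ≤ |F|²`.
-/

section Indistinguishable

variable {α : Type*} [PartialOrder α]

def Indistinguishable (F : Set α) (a b : α) : Prop :=
  ∀ f ∈ F, f ≠ a → f ≠ b → (f ≤ a ↔ f ≤ b) ∧ (a ≤ f ↔ b ≤ f)

theorem Indistinguishable.symm {F : Set α} {a b : α} (h : Indistinguishable F a b) :
    Indistinguishable F b a := fun f hf hfb hfa =>
  ⟨(h f hf hfa hfb).1.symm, (h f hf hfa hfb).2.symm⟩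

end Indistinguishable

theorem UCTP.exists_lt_not_le {P : Type} [PartialOrder P] (h : UCTP P) {p q : P} (hpq : p < q) :
    ∃ r < q, ¬r ≤ p := by
  by_contra! hle
  have hcov : p ⋖ q := ⟨hpq, fun r hpr hrq => hpr.not_ge (hle r hrq)⟩
  obtain ⟨r, hrp, -, hrq⟩ := h q p hcov
  exact hrq.2 (lt_of_le_of_ne (hle r hrq.1) hrp) hpq

section Saturation

variable {P α : Type} [PartialOrder P] [PartialOrder α]

theorem exists_pSaturated [Finite α] [Nonempty P] : ∃ F : Set α, PSaturated P F := by
  obtain ⟨F, hF, hmax⟩ := Set.toFinite {F : Set α | PFree P F}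
    |>.exists_maximalFor id _ ⟨∅, fun ⟨φ, _, hmem, _⟩ => hmem (Classical.arbitrary P)⟩
  refine ⟨F, hF, fun g hg => ?_⟩
  by_contra hfree
  exact hg (hmax hfree (Set.subset_insert g F) (Set.mem_insert g F))

theorem PSaturated.nonempty [Nonempty α] [Nontrivial P] {F : Set α} (h : PSaturated P F) :
    F.Nonempty := by
  rw [Set.nonempty_iff_ne_empty]
  rintro rfl
  obtain ⟨φ, hinj, hmem, -⟩ := h.2 (Classical.arbitrary α) (Set.notMem_empty _)
  obtain ⟨p, q, hpq⟩ := exists_pair_ne P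
  simp only [insert_empty_eq, Set.mem_singleton_iff] at hmem
  exact hpq (hinj ((hmem p).trans (hmem q).symm))

theorem InducedCopy.of_insert_of_indistinguishable {F : Set α} {f g : α} {φ : P → α}
    (hinj : φ.Injective) (hmem : ∀ x, φ x ∈ insert g F) (hiff : ∀ x y, φ x ≤ φ y ↔ x ≤ y)
    (hf : f ∈ F) (hfφ : f ∉ Set.range φ) (hfg : Indistinguishable F f g) : InducedCopy P F := by
  classical
  have hF : ∀ x, φ x ≠ g → φ x ∈ F := fun x hx => (hmem x).resolve_left hx
  have hne : ∀ x, φ x ≠ f := fun x hx => hfφ ⟨x, hx⟩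
  refine ⟨fun x => if φ x = g then f else φ x, fun x y hxy => ?_, fun x => ?_, fun x y => ?_⟩
  · dsimp only at hxy
    split_ifs at hxy with hx hy hy
    · exact hinj (hx.trans hy.symm)
    · exact absurd hxy.symm (hne y)
    · exact absurd hxy (hne x)
    · exact hinj hxy
  · dsimp only
    split_ifs with hx
    exacts [hf, hF x hx]
  · dsimp only
    split_ifs with hx hy hy
    · simp [hinj (hx.trans hy.symm)]
    · rw [← hiff, hx, (hfg _ (hF y hy) (hne y) hy).2]
    · rw [← hiff, hy, (hfg _ (hF x hx) (hne x) hx).1]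
    · exact hiff x y

theorem not_pSaturated_of_indistinguishable (huctp : UCTP P) {F : Set α} {f g : α}
    (hf : f ∈ F) (hg : g ∉ F) (hlt : f < g ∨ g < f) (hfg : Indistinguishable F f g) :
    ¬PSaturated P F := by
  rintro ⟨hfree, hsat⟩
  obtain ⟨φ, hinj, hmem, hiff⟩ := hsat g hg
  by_cases hfφ : f ∈ Set.range φ
  swap
  · exact hfree (.of_insert_of_indistinguishable hinj hmem hiff hf hfφ hfg)
  have hgφ : g ∈ Set.range φ := by
    by_contra hgφ
    exact hfree ⟨φ, hinj, fun x => (hmem x).resolve_left fun hx => hgφ ⟨x, hx⟩, hiff⟩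
  obtain ⟨p, rfl⟩ := hfφ
  obtain ⟨q, rfl⟩ := hgφ
  let e : P ↪o α := .ofMapLEIff φ hiff
  have hpq : ∀ r, r ≠ p → r ≠ q → (r ≤ p ↔ r ≤ q) := fun r hrp hrq => by
    rw [← hiff, ← hiff]
    exact (hfg _ ((hmem r).resolve_left (hinj.ne hrq)) (hinj.ne hrp) (hinj.ne hrq)).1
  have key : ∀ a b : P, a < b → (∀ r, r ≠ a → r ≠ b → (r ≤ a ↔ r ≤ b)) → False := by
    intro a b hab hrel
    obtain ⟨r, hrb, hra⟩ := huctp.exists_lt_not_le hab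
    exact hra ((hrel r (by rintro rfl; exact hra le_rfl) hrb.ne).mpr hrb.le)
  rcases hlt with hlt | hlt
  · exact key p q (e.lt_iff_lt.mp hlt) hpq
  · exact key q p (e.lt_iff_lt.mp hlt) fun r hrq hrp => (hpq r hrp hrq).symm

end Saturation

section Twins

variable {ι β : Type*} [LinearOrder β] {F : Set (ι → β)} {i : ι}

theorem indistinguishable_of_covBy {a b : ι → β} (hoff : ∀ x, x ≠ i → a x = b x)
    (hcov : a i ⋖ b i) (hbelow : ∀ k ∈ F, k ≠ b → k ≤ b → k i ≠ b i)
    (habove : ∀ k ∈ F, k ≠ a → a ≤ k → k i ≠ a i) : Indistinguishable F a b := by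
  have hab : a ≤ b := by
    intro x
    by_cases hx : x = i
    exacts [hx ▸ hcov.le, (hoff x hx).le]
  intro k hk hka hkb
  refine ⟨⟨fun h => h.trans hab, fun h x => ?_⟩, ⟨fun h x => ?_, hab.trans⟩⟩
  · by_cases hx : x = i
    · subst hx
      exact hcov.le_of_lt ((h x).lt_of_ne (hbelow k hk hkb h))
    · exact (h x).trans_eq (hoff x hx).symm
  · by_cases hx : x = i
    · subst hx
      exact hcov.ge_of_gt ((h x).lt_of_ne' (habove k hk hka h))
    · exact (hoff x hx).symm.trans_le (h x)

variable (hF : F.Finite) (hnsep : ∀ f ∈ F, ∀ f' ∈ F, (∀ x, x ≠ i → f x ≤ f' x) → f i ≤ f' i)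
include hF hnsep

theorem exists_indistinguishable_above [SuccOrder β] (h : ∃ f ∈ F, ¬IsMax (f i)) :
    ∃ f ∈ F, ∃ g ∉ F, f < g ∧ Indistinguishable F f g := by
  classical
  obtain ⟨f, ⟨hf, hfi⟩, hmax⟩ :=
    (hF.subset (Set.sep_subset F _)).exists_maximalFor id {f ∈ F | ¬IsMax (f i)} h
  set g := Function.update f i (Order.succ (f i))
  have hoff : ∀ x, x ≠ i → f x = g x := fun x hx => (Function.update_of_ne hx _ _).symm
  have hcov : f i ⋖ g i := by simpa [g] using Order.covBy_succ_of_not_isMax hfi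
  refine ⟨f, hf, g, fun hg => ?_, lt_update_self_iff.mpr (Order.lt_succ_of_not_isMax hfi),
    indistinguishable_of_covBy hoff hcov (fun k hk _ hkg hki => ?_) fun k hk hkf hfk hki => ?_⟩
  · exact hcov.lt.not_ge (hnsep g hg f hf fun x hx => (hoff x hx).ge)
  · exact hcov.lt.not_ge (hki ▸ hnsep k hk f hf fun x hx => (hoff x hx) ▸ hkg x)
  · exact hkf (le_antisymm (hmax ⟨hk, hki ▸ hfi⟩ hfk) hfk)

theorem exists_indistinguishable_below [PredOrder β] (h : ∃ f ∈ F, ¬IsMin (f i)) :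
    ∃ f ∈ F, ∃ g ∉ F, g < f ∧ Indistinguishable F f g := by
  obtain ⟨f, hf, g, hg, hlt, hfg⟩ := exists_indistinguishable_above (β := βᵒᵈ) (F := F) hF
    (fun f hf f' hf' h => hnsep f' hf' f hf h) h
  exact ⟨f, hf, g, hg, hlt, fun k hk hkf hkg => (hfg k hk hkf hkg).symm⟩

theorem exists_indistinguishable [SuccOrder β] [PredOrder β] [Nontrivial β] (hne : F.Nonempty) :
    ∃ f ∈ F, ∃ g ∉ F, (f < g ∨ g < f) ∧ Indistinguishable F f g := by
  by_cases h : ∃ f ∈ F, ¬IsMax (f i)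
  · obtain ⟨f, hf, g, hg, hlt, hfg⟩ := exists_indistinguishable_above hF hnsep h
    exact ⟨f, hf, g, hg, .inl hlt, hfg⟩
  · push Not at h
    obtain ⟨f, hf⟩ := hne
    obtain ⟨f, hf, g, hg, hlt, hfg⟩ :=
      exists_indistinguishable_below hF hnsep ⟨f, hf, (h f hf).not_isMin⟩
    exact ⟨f, hf, g, hg, .inr hlt, hfg⟩

end Twins

section Grid

variable {t n : ℕ} {F : Set (Fin n → Fin t)}

theorem Separating.of_not {i : Fin n} (h : ¬Separating F i) :
    ∀ f ∈ F, ∀ f' ∈ F, (∀ x, x ≠ i → f x ≤ f' x) → f i ≤ f' i := by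
  intro f hf f' hf' hoff
  by_contra hlt
  exact h ⟨f, hf, f', hf', by rintro rfl; exact hlt le_rfl, hoff, not_le.mp hlt⟩

theorem PSaturated.separating {P : Type} [PartialOrder P] [Nontrivial P] (huctp : UCTP P)
    (ht : 2 ≤ t) (hsat : PSaturated P F) (i : Fin n) : Separating F i := by
  by_contra hnsep
  have : Nontrivial (Fin t) := Fin.nontrivial_iff_two_le.mpr ht
  obtain ⟨f, hf, g, hg, hlt, hfg⟩ :=
    exists_indistinguishable F.toFinite (Separating.of_not hnsep) hsat.nonempty
  exact not_pSaturated_of_indistinguishable huctp hf hg hlt hfg hsat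

theorem le_ncard_mul_ncard_of_separating (hF : ∀ i, Separating F i) :
    n ≤ F.ncard * F.ncard := by
  choose f hf f' hf' hsep using hF
  -- a pair separating `i` cannot separate any `j ≠ i`, which would need `f i ≤ f' i`
  have hinj : Function.Injective fun i => ((⟨f i, hf i⟩ : F), (⟨f' i, hf' i⟩ : F)) := by
    intro i j hij
    simp only [Prod.mk.injEq, Subtype.mk.injEq] at hij
    by_contra hne
    have hle := (hsep j).2.1 i hne
    rw [← hij.1, ← hij.2] at hle
    exact hle.not_gt (hsep i).2.2
  simpa [Nat.card_coe_set_eq] using Nat.card_le_card_of_injective _ hinj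

end Grid

theorem exists_pSaturated_ncard_eq_satStar (P : Type) [PartialOrder P] [Nonempty P] (t n : ℕ) :
    ∃ F : Set (Fin n → Fin t), PSaturated P F ∧ F.ncard = satStar t n P := by
  obtain ⟨F, hF⟩ : ∃ F : Set (Fin n → Fin t), PSaturated P F := exists_pSaturated
  exact Nat.sInf_mem (s := {m | ∃ F : Set (Fin n → Fin t), PSaturated P F ∧ F.ncard = m})
    ⟨_, F, hF, rfl⟩

theorem stmt8 (t : ℕ) (ht : 2 ≤ t) (P : Type) [PartialOrder P] [Fintype P]
    (hcard : 2 ≤ Fintype.card P) (huctp : UCTP P) :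
    ∃ c : ℝ, 0 < c ∧ ∀ᶠ n : ℕ in atTop, c * Real.sqrt n ≤ (satStar t n P : ℝ) := by
  have : Nontrivial P := Fintype.one_lt_card_iff_nontrivial.mp hcard
  refine ⟨1, one_pos, Eventually.of_forall fun n => ?_⟩
  obtain ⟨F, hsat, hF⟩ := exists_pSaturated_ncard_eq_satStar P t n
  have hn : n ≤ satStar t n P * satStar t n P :=
    hF ▸ le_ncard_mul_ncard_of_separating (hsat.separating huctp ht)
  rw [one_mul, Real.sqrt_le_left (Nat.cast_nonneg _), sq]
  exact_mod_cast hn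
end

section
/- Let P be a finite poset, F ⊆ [t]^n an induced P-free, induced P-saturated family, and suppose coordinate i ∈ {1,...,n} is not separating for F and f(i) ∈ {1, t} for all f ∈ F. Then L_i(F) ⊆ [t]^{n+1} is induced P-free and induced P-saturated. -/
open Filter

section Aux

variable {t n : ℕ} {i : Fin n}

lemma lift_castSucc (f : Fin n → Fin t) (x : Fin n) :
    lift i f x.castSucc = f x := by simp [lift]

lemma lift_last (f : Fin n → Fin t) : lift i f (Fin.last n) = f i := by
  simp [lift]

lemma drop_lift (f : Fin n → Fin t) : drop (Fin.last n) (lift i f) = f := by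
  funext x
  simp [drop, lift, Fin.succAbove_last]

lemma lift_le_lift {f f' : Fin n → Fin t} :
    lift i f ≤ lift i f' ↔ f ≤ f' := by
  constructor
  · intro h x
    have := h x.castSucc
    rwa [lift_castSucc, lift_castSucc] at this
  · intro h y
    induction y using Fin.lastCases with
    | last => rw [lift_last, lift_last]; exact h i
    | cast x => rw [lift_castSucc, lift_castSucc]; exact h x

/-- Transfer an induced copy from `insert e F` to `insert g (lift i '' F)`. -/
lemma transfer (P : Type) [PartialOrder P] (F : Set (Fin n → Fin t))
    (g : Fin (n + 1) → Fin t) (hg : g ∉ lift i '' F)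
    (e : Fin n → Fin t)
    (hA : ∀ f ∈ F, (e ≤ f ↔ g ≤ lift i f))
    (hB : ∀ f ∈ F, (f ≤ e ↔ lift i f ≤ g))
    (hcopy : InducedCopy P (insert e F)) :
    InducedCopy P (insert g (lift i '' F)) := by
  obtain ⟨φ, hφinj, hφmem, hφord⟩ := hcopy
  have hmemF : ∀ y, φ y ≠ e → φ y ∈ F := fun y hy => ((hφmem y).resolve_left hy)
  refine ⟨fun x => if φ x = e then g else lift i (φ x), ?_, ?_, ?_⟩
  · intro x y hxy
    by_cases hx : φ x = e <;> by_cases hy : φ y = e <;> simp only [hx, hy,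
      if_pos, if_neg, if_true, if_false] at hxy
    · exact hφinj (hx.trans hy.symm)
    · exact absurd ⟨φ y, hmemF y hy, hxy.symm⟩ hg
    · exact absurd ⟨φ x, hmemF x hx, hxy⟩ hg
    · exact hφinj (lift_le_lift.mp hxy.le |>.antisymm (lift_le_lift.mp hxy.ge))
  · intro x
    by_cases hx : φ x = e
    · simp [hx]
    · simp only [if_neg hx]
      exact Set.mem_insert_iff.mpr (Or.inr ⟨φ x, hmemF x hx, rfl⟩)
  · intro x y
    by_cases hx : φ x = e <;> by_cases hy : φ y = e <;>
      simp only [hx, hy, if_pos, if_neg, if_true, if_false]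
    · have hxy : x = y := hφinj (hx.trans hy.symm)
      subst hxy; simp
    · rw [← hA (φ y) (hmemF y hy), ← hx, hφord]
    · rw [← hB (φ x) (hmemF x hx), ← hy, hφord]
    · rw [lift_le_lift, hφord]

end Aux

theorem stmt11 (t n : ℕ) (P : Type) [PartialOrder P] [Finite P]
    (F : Set (Fin n → Fin t)) (hsat : PSaturated P F)
    (i : Fin n) (hns : ¬ Separating F i)
    (hval : ∀ f ∈ F, (f i : ℕ) = 0 ∨ (f i : ℕ) = t - 1) :
    PSaturated P (lift i '' F) := by
  obtain ⟨hfree, hsatur⟩ := hsat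
  constructor
  · -- P-free
    rintro ⟨φ, hinj, hmem, hord⟩
    apply hfree
    have key : ∀ x, lift i (drop (Fin.last n) (φ x)) = φ x := by
      intro x
      obtain ⟨f, _, hfe⟩ := hmem x
      rw [← hfe, drop_lift]
    refine ⟨fun x => drop (Fin.last n) (φ x), ?_, ?_, ?_⟩
    · intro x y hxy
      dsimp only at hxy
      apply hinj
      rw [← key x, ← key y, hxy]
    · intro x
      obtain ⟨f, hf, hfe⟩ := hmem x
      have h2 : drop (Fin.last n) (φ x) = f := by rw [← hfe, drop_lift]
      dsimp only
      rwa [h2]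
    · intro x y
      dsimp only
      rw [← hord x y, ← key x, ← key y, lift_le_lift, key, key]
  · -- saturated
    intro g hg
    set a := g i.castSucc with ha
    set b := g (Fin.last n) with hb
    set e : Fin t → (Fin n → Fin t) := fun c x => if x = i then c else g x.castSucc with he
    have hAmax : ∀ f : Fin n → Fin t, e (a ⊔ b) ≤ f ↔ g ≤ lift i f := by
      intro f
      constructor
      · intro h y
        induction y using Fin.lastCases with
        | last =>
          rw [lift_last]
          exact le_trans le_sup_right (by simpa [he] using h i)
        | cast x =>
          rw [lift_castSucc]
          by_cases hx : x = i
          · subst hx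
            exact le_trans le_sup_left (by simpa [he] using h x)
          · simpa [he, hx] using h x
      · intro h x
        by_cases hx : x = i
        · subst hx
          simp only [he, if_pos rfl]
          refine sup_le ?_ ?_
          · have := h x.castSucc; rwa [lift_castSucc] at this
          · have := h (Fin.last n); rwa [lift_last] at this
        · simp only [he, if_neg hx]
          have := h x.castSucc; rwa [lift_castSucc] at this
    have hBmin : ∀ f : Fin n → Fin t, f ≤ e (a ⊓ b) ↔ lift i f ≤ g := by
      intro f
      constructor
      · intro h y
        induction y using Fin.lastCases with
        | last =>
          rw [lift_last]
          exact le_trans (by simpa [he] using h i) inf_le_right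
        | cast x =>
          rw [lift_castSucc]
          by_cases hx : x = i
          · subst hx
            exact le_trans (by simpa [he] using h x) inf_le_left
          · simpa [he, hx] using h x
      · intro h x
        by_cases hx : x = i
        · subst hx
          simp only [he, if_pos rfl]
          refine le_inf ?_ ?_
          · have := h x.castSucc; rwa [lift_castSucc] at this
          · have := h (Fin.last n); rwa [lift_last] at this
        · simp only [he, if_neg hx]
          have := h x.castSucc; rwa [lift_castSucc] at this
    have hmin_le_max : e (a ⊓ b) ≤ e (a ⊔ b) := by
      intro x
      by_cases hx : x = i <;> simp [he, hx, inf_le_sup]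
    -- find a good e
    have main : ∃ c : Fin t, (∀ f ∈ F, (e c ≤ f ↔ g ≤ lift i f)) ∧
        (∀ f ∈ F, (f ≤ e c ↔ lift i f ≤ g)) := by
      by_cases hc : ∀ f ∈ F, f ≤ e (a ⊔ b) → lift i f ≤ g
      · refine ⟨a ⊔ b, fun f _ => hAmax f, fun f hf => ⟨hc f hf, fun h => ?_⟩⟩
        exact le_trans ((hBmin f).mpr h) hmin_le_max
      · push_neg at hc
        obtain ⟨f0, hf0F, hf0le, hf0g⟩ := hc
        have hf0i : a ⊓ b < f0 i := by
          by_contra hcon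
          push_neg at hcon
          apply hf0g
          rw [← hBmin]
          intro x
          by_cases hx : x = i
          · subst hx; simpa [he] using hcon
          · simpa [he, hx] using (by simpa [he, hx] using hf0le x : f0 x ≤ g x.castSucc)
        refine ⟨a ⊓ b, fun f hf =>
          ⟨fun hmin => ?_, fun h => le_trans hmin_le_max ((hAmax f).mpr h)⟩,
          fun f _ => hBmin f⟩
        · -- e (a ⊓ b) ≤ f → g ≤ lift i f
          rw [← hAmax]
          intro x
          by_cases hx : x = i
          · subst hx
            simp only [he, if_pos rfl]
            rcases hval f hf with h0 | h1
            · -- f x = 0 : contradiction with non-separating via f0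
              exfalso
              apply hns
              refine ⟨f0, hf0F, f, hf, ?_, ?_, ?_⟩
              · intro heq
                have := hf0i
                rw [heq] at this
                have : (a ⊓ b : Fin t).val < (f x : Fin t).val := this
                omega
              · intro y hy
                have h1 : f0 y ≤ g y.castSucc := by simpa [he, hy] using hf0le y
                have h2 : g y.castSucc ≤ f y := by simpa [he, hy] using hmin y
                exact le_trans h1 h2
              · have hlt : (a ⊓ b : Fin t).val < (f0 x).val := hf0i
                have : (f x).val < (f0 x).val := by omega
                exact this
            · -- f x has max value
              have hx1 : ((a ⊔ b : Fin t) : ℕ) < t := (a ⊔ b).isLt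
              have : ((a ⊔ b : Fin t) : ℕ) ≤ (f x : ℕ) := by omega
              exact this
          · simpa [he, hx] using hmin x
    obtain ⟨c, hA, hB⟩ := main
    have heF : e c ∉ F := by
      intro hceF
      apply hg
      refine ⟨e c, hceF, ?_⟩
      exact le_antisymm (((hB (e c) hceF).mp le_rfl)) (((hA (e c) hceF).mp le_rfl))
    exact transfer P F g hg (e c) hA hB (hsatur (e c) heF)
end
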